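/- Let 𝒢 be a periodic evolving graph with period Γ, emulated graph G(𝒢), and extended path set P* = static(𝒫⁰), and let M be a demand matrix. If F : P* → ℝ≥0 is a legal flow in G(𝒢) achieving throughput θ for M, then the temporal flow ℱ defined by ℱ(δ) = (Γ/(1−Δu))·F(p) for every p ∈ P* and every δ obtained from temporal(p) (the identifier of p) by shifting all its times by a nonnegative integer multiple of Γ, is a legal temporal flow in 𝒢 achieving throughput θ for M. -/

import Mathlib

open scoped ENNReal NNReal BigOperators

namespace RDCN

/-- A directed edge. -/
abbrev Edge (V : Type*) := V × V
/-- A temporal path (or a labelled-edge path): a list of edge/time(label) pairs. -/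
abbrev TPath (V : Type*) := List (Edge V × ℕ)
/-- An extended path in the emulated graph: a labelled-edge path together with its
unique identifier (a temporal path). -/
abbrev ExtPath (V : Type*) := TPath V × TPath V

variable {V : Type*}

/-- The vertex sequence of a list of directed edges. -/
def pathVerts (es : List (Edge V)) : List V :=
  match es with
  | [] => []
  | e :: _ => e.1 :: es.map Prod.snd

/-- A nonempty list of directed edges forming a directed path visiting pairwise
distinct vertices. -/
def IsSimpleEdgePath (es : List (Edge V)) : Prop :=
  es ≠ [] ∧ es.Chain' (fun e e' => e.2 = e'.1) ∧ (pathVerts es).Nodup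

/-- `es` is a path from `s` to `d`. -/
def EndpointsOf (es : List (Edge V)) (s d : V) : Prop :=
  es.head?.map Prod.fst = some s ∧ es.getLast?.map Prod.snd = some d

/-- A periodic evolving graph with period `Γ`, timeslot duration `Δ` and
reconfiguration fraction `Δu`. -/
structure PEG (V : Type*) where
  Γ : ℕ
  Γ_pos : 1 ≤ Γ
  E : ℕ → Set (V × V)
  E_periodic : ∀ t, E (t + Γ) = E t
  c : ℕ → V × V → ℝ≥0
  c_periodic : ∀ t e, c (t + Γ) e = c t e
  c_zero : ∀ t e, e ∉ E t → c t e = 0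
  Δ : ℝ≥0
  Δ_pos : 0 < Δ
  Δu : ℝ≥0
  Δu_lt_one : Δu < 1

/-- A legal temporal path in the periodic evolving graph `G`. -/
def IsTemporalPath (G : PEG V) (δ : TPath V) : Prop :=
  δ ≠ [] ∧ (∀ x ∈ δ, x.1 ∈ G.E x.2) ∧
    δ.Chain' (fun x y => x.2 < y.2 ∧ y.2 ≤ x.2 + G.Γ) ∧
    IsSimpleEdgePath (δ.map Prod.fst)

/-- The foundation set `𝒫⁰`: legal temporal paths starting in the first period. -/
def Foundation (G : PEG V) : Set (TPath V) :=
  {δ | IsTemporalPath G δ ∧ ∀ t₀ : ℕ, δ.head?.map Prod.snd = some t₀ → t₀ < G.Γ}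

/-- The temporal path `δ` goes from `s` to `d`. -/
def TEndpoints (δ : TPath V) (s d : V) : Prop :=
  EndpointsOf (δ.map Prod.fst) s d

/-- `𝒫⁰_{s,d}`. -/
def FoundationSD (G : PEG V) (s d : V) : Set (TPath V) :=
  {δ | δ ∈ Foundation G ∧ TEndpoints δ s d}

/-- Shift all times of a temporal path by `k·Γ`. -/
def shiftPath (Γ k : ℕ) (δ : TPath V) : TPath V :=
  δ.map fun x => (x.1, x.2 + k * Γ)

/-- `𝒫*`: all periodic shifts of foundation paths. -/
def PStar (G : PEG V) : Set (TPath V) :=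
  {δ' | ∃ δ ∈ Foundation G, ∃ k : ℕ, δ' = shiftPath G.Γ k δ}

/-- `𝒫*_{s,d}`. -/
def PStarSD (G : PEG V) (s d : V) : Set (TPath V) :=
  {δ | δ ∈ PStar G ∧ TEndpoints δ s d}

/-- A legal temporal flow: nonnegative (enforced by `ℝ≥0`), invariant under
shifting a path's times by `Γ`, and obeying the capacity constraints at all times. -/
structure IsLegalTemporalFlow (G : PEG V) (F : TPath V → ℝ≥0) : Prop where
  periodic : ∀ δ ∈ PStar G, F (shiftPath G.Γ 1 δ) = F δ
  capacity : ∀ (e : Edge V) (t : ℕ),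
    ∑' δ : {δ : TPath V // δ ∈ PStar G ∧ (e, t) ∈ δ}, ((F (δ : TPath V) : ℝ≥0) : ℝ≥0∞)
      ≤ (G.c t e : ℝ≥0∞)

/-- The factor `(1-Δu)/Γ`. -/
noncomputable def capFactor (G : PEG V) : ℝ≥0∞ :=
  ((1 - G.Δu : ℝ≥0) : ℝ≥0∞) / (G.Γ : ℝ≥0∞)

/-- The temporal flow `F` achieves throughput `θ` for the demand matrix `m`:
`((1-Δu)/Γ)·Σ_{δ ∈ 𝒫⁰_{s,d}} F(δ) ≥ θ·m_{s,d}` for all `s, d`. -/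
def AchievesThroughputT (G : PEG V) (F : TPath V → ℝ≥0) (m : V → V → ℝ≥0)
    (θ : ℝ≥0∞) : Prop :=
  ∀ s d : V, θ * (m s d : ℝ≥0∞) ≤
    capFactor G * ∑' δ : FoundationSD G s d, ((F (δ : TPath V) : ℝ≥0) : ℝ≥0∞)

/-- Capacity `ĉ(e,ℓ) = ((1-Δu)/Γ)·c_ℓ(e)` of a labelled edge of the emulated graph. -/
noncomputable def chat (G : PEG V) (e : Edge V) (ℓ : ℕ) : ℝ≥0∞ :=
  capFactor G * (G.c ℓ e : ℝ≥0∞)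

/-- The map `static` sending a temporal path `δ = ⟨(eᵢ,tᵢ)⟩` to the extended path
`(⟨(eᵢ, tᵢ mod Γ)⟩, δ)` with `δ` as the unique identifier. -/
def staticOf (Γ : ℕ) (δ : TPath V) : ExtPath V :=
  (δ.map fun x => (x.1, x.2 % Γ), δ)

/-- `P* = static(𝒫⁰)`, the extended path set of the emulated graph. -/
def PStarStatic (G : PEG V) : Set (ExtPath V) :=
  staticOf G.Γ '' Foundation G

/-- The extended path `p` goes from `s` to `d`. -/
def SEndpoints (p : ExtPath V) (s d : V) : Prop :=
  EndpointsOf (p.1.map Prod.fst) s d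

/-- A legal flow on a set `P` of extended paths of the emulated graph: equal on paths
with identical labelled-edge sequences, and obeying the capacity constraints. -/
structure IsLegalStaticFlow (G : PEG V) (P : Set (ExtPath V)) (F : ExtPath V → ℝ≥0) :
    Prop where
  congr : ∀ p ∈ P, ∀ q ∈ P, p.1 = q.1 → F p = F q
  capacity : ∀ (e : Edge V) (ℓ : ℕ), ℓ < G.Γ →
    ∑' p : {p : ExtPath V // p ∈ P ∧ (e, ℓ) ∈ p.1}, ((F (p : ExtPath V) : ℝ≥0) : ℝ≥0∞)
      ≤ chat G e ℓ

/-- The flow `F` on the extended path set `P` achieves throughput `θ` for `m`: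
`Σ_{p ∈ P_{s,d}} F(p) ≥ θ·m_{s,d}` for all `s, d`. -/
def AchievesThroughputS (P : Set (ExtPath V)) (F : ExtPath V → ℝ≥0) (m : V → V → ℝ≥0)
    (θ : ℝ≥0∞) : Prop :=
  ∀ s d : V, θ * (m s d : ℝ≥0∞) ≤
    ∑' p : {p : ExtPath V // p ∈ P ∧ SEndpoints p s d}, ((F (p : ExtPath V) : ℝ≥0) : ℝ≥0∞)

/-- First time of a temporal path. -/
def tStart (δ : TPath V) : ℕ := (δ.head?.map Prod.snd).getD 0
/-- Last time of a temporal path. -/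
def tEnd (δ : TPath V) : ℕ := (δ.getLast?.map Prod.snd).getD 0

/-- The delay `L(δ) = (t_n − t₁ + 1)·Δ + (Γ−1)·Δ` of a temporal path. -/
noncomputable def delay (G : PEG V) (δ : TPath V) : ℝ≥0∞ :=
  ((tEnd δ - tStart δ + 1 : ℕ) : ℝ≥0∞) * (G.Δ : ℝ≥0∞) +
    ((G.Γ - 1 : ℕ) : ℝ≥0∞) * (G.Δ : ℝ≥0∞)

/-- `Σ_{δ ∈ 𝒫⁰_{s,d}} F(δ)`. -/
noncomputable def sdSum (G : PEG V) (F : TPath V → ℝ≥0) (s d : V) : ℝ≥0∞ :=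
  ∑' δ : FoundationSD G s d, ((F (δ : TPath V) : ℝ≥0) : ℝ≥0∞)

/-- `r_δ = F(δ)/Σ_{δ' ∈ 𝒫⁰_{s,d}} F(δ')` (with value `0` when the denominator is `0`,
which holds automatically since then `F(δ) = 0` for `δ ∈ 𝒫⁰_{s,d}`). -/
noncomputable def rfrac (G : PEG V) (F : TPath V → ℝ≥0) (s d : V) (δ : TPath V) : ℝ≥0∞ :=
  ((F δ : ℝ≥0) : ℝ≥0∞) / sdSum G F s d

/-- Total demand `M_tot = Σ_{s,d} m_{s,d}`. -/
noncomputable def Mtot [Fintype V] (m : V → V → ℝ≥0) : ℝ≥0∞ :=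
  ∑ s : V, ∑ d : V, (m s d : ℝ≥0∞)

/-- Average route delay `ARD(M,F) = Σ_{s,d} (m_{s,d}/M_tot)·Σ_{δ ∈ 𝒫⁰_{s,d}} r_δ·L(δ)`. -/
noncomputable def ARD [Fintype V] (G : PEG V) (F : TPath V → ℝ≥0) (m : V → V → ℝ≥0) :
    ℝ≥0∞ :=
  ∑ s : V, ∑ d : V, ((m s d : ℝ≥0∞) / Mtot m) *
    ∑' δ : FoundationSD G s d, rfrac G F s d (δ : TPath V) * delay G (δ : TPath V)

/-- Average route length
`ARL(M,F) = Σ_{s,d} Σ_{δ ∈ 𝒫⁰_{s,d}} (m_{s,d}/M_tot)·r_δ·len(δ)`. -/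
noncomputable def ARLt [Fintype V] (G : PEG V) (F : TPath V → ℝ≥0) (m : V → V → ℝ≥0) :
    ℝ≥0∞ :=
  ∑ s : V, ∑ d : V, ∑' δ : FoundationSD G s d,
    ((m s d : ℝ≥0∞) / Mtot m) * rfrac G F s d (δ : TPath V) * ((δ : TPath V).length : ℝ≥0∞)

/-!
Every path of `𝒫*` is a shift `δ₀ + kΓ` of a foundation path `δ₀`, and `ℱ` gives it the value
`(Γ/(1−Δu))·F(static δ₀)`. This is invariant under `k ↦ k + 1`, and the throughput identity holds
because `static` is a bijection from `𝒫⁰_{s,d}` onto `P*_{s,d}` and the factor `(1−Δu)/Γ` cancels.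
For the capacity at `(e, t)`: a foundation path uses `e` at most once, so at most one of its
shifts passes through `(e, t)`, and that shift is mapped to a path of `P*` through the labelled
edge `(e, t mod Γ)`. The load of `ℱ` on `(e, t)` is thus at most `Γ/(1−Δu)` times the load of `F`
on `(e, t mod Γ)`, which is at most `c_{t mod Γ}(e) = c_t(e)`.
-/

section Paths

variable {Γ : ℕ}

lemma shiftPath_zero (δ : TPath V) : shiftPath Γ 0 δ = δ := by
  simp [shiftPath]

lemma shiftPath_one_shiftPath (k : ℕ) (δ : TPath V) :
    shiftPath Γ 1 (shiftPath Γ k δ) = shiftPath Γ (k + 1) δ := by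
  simp only [shiftPath, List.map_map]
  refine List.map_congr_left fun x _ => ?_
  simp only [Function.comp_apply, Prod.mk.injEq, true_and]
  ring

lemma mem_shiftPath {k : ℕ} {δ : TPath V} {e : Edge V} {t : ℕ} :
    (e, t) ∈ shiftPath Γ k δ ↔ ∃ t₀, (e, t₀) ∈ δ ∧ t₀ + k * Γ = t := by
  rw [shiftPath, List.mem_map]
  constructor
  · rintro ⟨⟨e', t₀⟩, hmem, h⟩
    obtain ⟨rfl, rfl⟩ := Prod.mk.inj h
    exact ⟨t₀, hmem, rfl⟩
  · rintro ⟨t₀, hmem, rfl⟩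
    exact ⟨(e, t₀), hmem, rfl⟩

lemma mem_staticOf_fst {δ : TPath V} {e : Edge V} {ℓ : ℕ} :
    (e, ℓ) ∈ (staticOf Γ δ).1 ↔ ∃ t₀, (e, t₀) ∈ δ ∧ t₀ % Γ = ℓ := by
  rw [staticOf, List.mem_map]
  constructor
  · rintro ⟨⟨e', t₀⟩, hmem, h⟩
    obtain ⟨rfl, rfl⟩ := Prod.mk.inj h
    exact ⟨t₀, hmem, rfl⟩
  · rintro ⟨t₀, hmem, rfl⟩
    exact ⟨(e, t₀), hmem, rfl⟩

lemma staticOf_injective : Function.Injective (staticOf (V := V) Γ) :=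
  fun _ _ h => congrArg Prod.snd h

lemma mem_staticOf_fst_of_mem_shiftPath {k : ℕ} {δ : TPath V} {e : Edge V} {t : ℕ}
    (h : (e, t) ∈ shiftPath Γ k δ) : (e, t % Γ) ∈ (staticOf Γ δ).1 := by
  obtain ⟨t₀, hmem, rfl⟩ := mem_shiftPath.mp h
  exact mem_staticOf_fst.mpr ⟨t₀, hmem, (Nat.add_mul_mod_self_right _ _ _).symm⟩

lemma eq_of_mem_shiftPath_of_mem_shiftPath (hΓ : 0 < Γ) {δ : TPath V}
    (hδ : (δ.map Prod.fst).Nodup) {e : Edge V} {t k k' : ℕ}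
    (h : (e, t) ∈ shiftPath Γ k δ) (h' : (e, t) ∈ shiftPath Γ k' δ) : k = k' := by
  obtain ⟨t₀, hmem, ht⟩ := mem_shiftPath.mp h
  obtain ⟨t₀', hmem', ht'⟩ := mem_shiftPath.mp h'
  have hsame : (e, t₀) = (e, t₀') := List.inj_on_of_nodup_map hδ hmem hmem' rfl
  rw [Prod.mk.injEq] at hsame
  rw [← hsame.2, ← ht] at ht'
  exact (Nat.eq_of_mul_eq_mul_right hΓ (Nat.add_left_cancel ht')).symm

lemma sEndpoints_staticOf_iff {δ : TPath V} {s d : V} :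
    SEndpoints (staticOf Γ δ) s d ↔ TEndpoints δ s d := by
  simp [SEndpoints, TEndpoints, staticOf, List.map_map, Function.comp_def]

lemma IsSimpleEdgePath.nodup {es : List (Edge V)} (h : IsSimpleEdgePath es) : es.Nodup := by
  obtain ⟨-, -, hverts⟩ := h
  cases es with
  | nil => exact List.nodup_nil
  | cons e es => exact ((List.nodup_cons.mp hverts).2).of_map _

end Paths

namespace PEG

variable (G : PEG V)

lemma c_add_mul (t k : ℕ) (e : Edge V) : G.c (t + k * G.Γ) e = G.c t e := by
  induction k with
  | zero => simp
  | succ n ih => rw [add_one_mul, ← add_assoc, G.c_periodic, ih]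

lemma c_mod (t : ℕ) (e : Edge V) : G.c (t % G.Γ) e = G.c t e := by
  conv_rhs => rw [← Nat.mod_add_div t G.Γ, mul_comm]
  rw [c_add_mul]

lemma capFactor_mul_inv : capFactor G * (((G.Γ : ℝ≥0) / (1 - G.Δu) : ℝ≥0) : ℝ≥0∞) = 1 := by
  have hu : (1 - G.Δu : ℝ≥0) ≠ 0 := (tsub_pos_of_lt G.Δu_lt_one).ne'
  have hΓ : (G.Γ : ℝ≥0) ≠ 0 := Nat.cast_ne_zero.mpr (Nat.one_le_iff_ne_zero.mp G.Γ_pos)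
  rw [capFactor, ← ENNReal.coe_natCast, ← ENNReal.coe_div hΓ, ← ENNReal.coe_mul,
    div_mul_div_comm, mul_comm (1 - G.Δu), div_self (mul_ne_zero hΓ hu), ENNReal.coe_one]

end PEG

lemma nodup_map_fst_of_mem_foundation {G : PEG V} {δ : TPath V} (h : δ ∈ Foundation G) :
    (δ.map Prod.fst).Nodup :=
  h.1.2.2.2.nodup

lemma exists_injective_pStarStatic_of_mem (G : PEG V) (e : Edge V) (t : ℕ) :
    ∃ ι : {δ : TPath V // δ ∈ PStar G ∧ (e, t) ∈ δ} →
        {p : ExtPath V // p ∈ PStarStatic G ∧ (e, t % G.Γ) ∈ p.1},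
      Function.Injective ι ∧ ∀ δ, ∃ k, δ.1 = shiftPath G.Γ k (ι δ).1.2 := by
  choose base hbase shift hshift using fun δ : {δ : TPath V // δ ∈ PStar G ∧ (e, t) ∈ δ} => δ.2.1
  have hmem : ∀ δ, (e, t) ∈ shiftPath G.Γ (shift δ) (base δ) := fun δ => hshift δ ▸ δ.2.2
  refine ⟨fun δ => ⟨staticOf G.Γ (base δ), ⟨base δ, hbase δ, rfl⟩,
    mem_staticOf_fst_of_mem_shiftPath (hmem δ)⟩, fun δ δ' h => ?_, fun δ => ⟨shift δ, hshift δ⟩⟩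
  have hbase_eq : base δ = base δ' := staticOf_injective (congrArg Subtype.val h)
  have hshift_eq : shift δ = shift δ' :=
    eq_of_mem_shiftPath_of_mem_shiftPath G.Γ_pos (nodup_map_fst_of_mem_foundation (hbase δ'))
      (hbase_eq ▸ hmem δ) (hmem δ')
  exact Subtype.ext (by rw [hshift δ, hshift δ', hbase_eq, hshift_eq])

section Conversion

variable {G : PEG V} {F : ExtPath V → ℝ≥0} {ℱ : TPath V → ℝ≥0}

lemma IsLegalStaticFlow.load_le_capacity (hF : IsLegalStaticFlow G (PStarStatic G) F)
    (hℱ : ∀ p ∈ PStarStatic G, ∀ k : ℕ,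
      ℱ (shiftPath G.Γ k p.2) = ((G.Γ : ℝ≥0) / (1 - G.Δu)) * F p) (e : Edge V) (t : ℕ) :
    ∑' δ : {δ : TPath V // δ ∈ PStar G ∧ (e, t) ∈ δ}, ((ℱ δ : ℝ≥0) : ℝ≥0∞) ≤ G.c t e := by
  set C : ℝ≥0 := (G.Γ : ℝ≥0) / (1 - G.Δu)
  obtain ⟨ι, hι, hshift⟩ := exists_injective_pStarStatic_of_mem G e t
  have hvalue : ∀ δ, ((ℱ δ.1 : ℝ≥0) : ℝ≥0∞) = C * F (ι δ).1 := fun δ => by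
    obtain ⟨k, hk⟩ := hshift δ
    rw [hk, hℱ _ (ι δ).2.1, ENNReal.coe_mul]
  calc ∑' δ : {δ : TPath V // δ ∈ PStar G ∧ (e, t) ∈ δ}, ((ℱ δ : ℝ≥0) : ℝ≥0∞)
      = ∑' δ, (C : ℝ≥0∞) * F (ι δ).1 := tsum_congr hvalue
    _ ≤ ∑' p : {p : ExtPath V // p ∈ PStarStatic G ∧ (e, t % G.Γ) ∈ p.1}, (C : ℝ≥0∞) * F p.1 :=
      ENNReal.tsum_comp_le_tsum_of_injective hι fun p => (C : ℝ≥0∞) * F p.1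
    _ = C * ∑' p : {p : ExtPath V // p ∈ PStarStatic G ∧ (e, t % G.Γ) ∈ p.1}, (F p.1 : ℝ≥0∞) :=
      ENNReal.tsum_mul_left
    _ ≤ C * chat G e (t % G.Γ) := by
      gcongr
      exact hF.capacity e _ (Nat.mod_lt t G.Γ_pos)
    _ = G.c t e := by
      rw [chat, ← mul_assoc, mul_comm _ (capFactor G), G.capFactor_mul_inv, one_mul, G.c_mod]

theorem IsLegalStaticFlow.isLegalTemporalFlow (hF : IsLegalStaticFlow G (PStarStatic G) F)
    (hℱ : ∀ p ∈ PStarStatic G, ∀ k : ℕ,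
      ℱ (shiftPath G.Γ k p.2) = ((G.Γ : ℝ≥0) / (1 - G.Δu)) * F p) :
    IsLegalTemporalFlow G ℱ where
  periodic := by
    rintro δ ⟨δ₀, hδ₀, k, rfl⟩
    have hp : staticOf G.Γ δ₀ ∈ PStarStatic G := ⟨δ₀, hδ₀, rfl⟩
    rw [shiftPath_one_shiftPath]
    exact (hℱ _ hp (k + 1)).trans (hℱ _ hp k).symm
  capacity := hF.load_le_capacity hℱ

lemma tsum_foundationSD_staticOf (G : PEG V) (s d : V) (g : ExtPath V → ℝ≥0∞) :
    ∑' δ : FoundationSD G s d, g (staticOf G.Γ δ) =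
      ∑' p : {p : ExtPath V // p ∈ PStarStatic G ∧ SEndpoints p s d}, g p := by
  let staticEquiv : FoundationSD G s d ≃
      {p : ExtPath V // p ∈ PStarStatic G ∧ SEndpoints p s d} :=
    Equiv.ofBijective
      (fun δ => ⟨staticOf G.Γ δ, ⟨δ, δ.2.1, rfl⟩, sEndpoints_staticOf_iff.mpr δ.2.2⟩)
      ⟨fun δ δ' h => Subtype.ext (staticOf_injective (congrArg Subtype.val h)),
        fun ⟨_, ⟨δ, hδ, hp⟩, hsd⟩ => ⟨⟨δ, hδ, sEndpoints_staticOf_iff.mp (hp ▸ hsd)⟩,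
          Subtype.ext hp⟩⟩
  exact staticEquiv.tsum_eq fun p => g p

theorem AchievesThroughputS.achievesThroughputT {m : V → V → ℝ≥0} {θ : ℝ≥0∞}
    (hF : AchievesThroughputS (PStarStatic G) F m θ)
    (hℱ : ∀ p ∈ PStarStatic G, ∀ k : ℕ,
      ℱ (shiftPath G.Γ k p.2) = ((G.Γ : ℝ≥0) / (1 - G.Δu)) * F p) :
    AchievesThroughputT G ℱ m θ := by
  intro s d
  have hvalue : ∀ δ : FoundationSD G s d, ((ℱ δ : ℝ≥0) : ℝ≥0∞) =
      (((G.Γ : ℝ≥0) / (1 - G.Δu) : ℝ≥0) : ℝ≥0∞) * F (staticOf G.Γ δ) := fun δ => by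
    have h := hℱ _ ⟨δ, δ.2.1, rfl⟩ 0
    rw [shiftPath_zero] at h
    exact_mod_cast h
  calc θ * (m s d : ℝ≥0∞)
      ≤ ∑' p : {p : ExtPath V // p ∈ PStarStatic G ∧ SEndpoints p s d}, (F p.1 : ℝ≥0∞) :=
        hF s d
    _ = ∑' δ : FoundationSD G s d, (F (staticOf G.Γ δ) : ℝ≥0∞) :=
        (tsum_foundationSD_staticOf G s d fun p => (F p : ℝ≥0∞)).symm
    _ = capFactor G * ∑' δ : FoundationSD G s d, ((ℱ δ : ℝ≥0) : ℝ≥0∞) := by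
        rw [tsum_congr hvalue, ENNReal.tsum_mul_left, ← mul_assoc, G.capFactor_mul_inv, one_mul]

end Conversion

theorem statement1_general {V : Type*} (G : PEG V)
    (m : V → V → ℝ≥0) (θ : ℝ≥0∞) (F : ExtPath V → ℝ≥0)
    (hleg : IsLegalStaticFlow G (PStarStatic G) F)
    (hth : AchievesThroughputS (PStarStatic G) F m θ)
    (ℱ : TPath V → ℝ≥0)
    (hℱ : ∀ p ∈ PStarStatic G, ∀ k : ℕ,
      ℱ (shiftPath G.Γ k p.2) = ((G.Γ : ℝ≥0) / (1 - G.Δu)) * F p) :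
    IsLegalTemporalFlow G ℱ ∧ AchievesThroughputT G ℱ m θ :=
  ⟨hleg.isLegalTemporalFlow hℱ, hth.achievesThroughputT hℱ⟩

/-- Lemma: static-to-evolving conversion.
If `F` is a legal flow on `P* = static(𝒫⁰)` in the emulated graph achieving
throughput `θ` for `m`, then the temporal flow `ℱ` defined by
`ℱ(δ) = (Γ/(1−Δu))·F(p)` for every `p ∈ P*` and every `δ` obtained from the
identifier `temporal(p) = p.2` by shifting all times by a nonnegative multiple of `Γ`,
is a legal temporal flow achieving throughput `θ` for `m`. -/
theorem statement1 {V : Type*} [Fintype V] [DecidableEq V] (G : PEG V)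
    (m : V → V → ℝ≥0) (θ : ℝ≥0∞) (F : ExtPath V → ℝ≥0)
    (hleg : IsLegalStaticFlow G (PStarStatic G) F)
    (hth : AchievesThroughputS (PStarStatic G) F m θ)
    (ℱ : TPath V → ℝ≥0)
    (hℱ : ∀ p ∈ PStarStatic G, ∀ k : ℕ,
      ℱ (shiftPath G.Γ k p.2) = ((G.Γ : ℝ≥0) / (1 - G.Δu)) * F p) :
    IsLegalTemporalFlow G ℱ ∧ AchievesThroughputT G ℱ m θ :=
  statement1_general G m θ F hleg hth ℱ hℱ

end RDCN
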